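/- Let G be a finitely generated LPF group with positive rank gradient, and let A, B be finitely generated subgroups of infinite index in G. Then the profinite measure of the product set satisfies μ(AB) = 0. -/

import Mathlib

open scoped Pointwise

universe u

/-- `d(H)`: the smallest cardinality of a generating set of the subgroup `H`. -/
noncomputable def subgroupRank {G : Type u} [Group G] (H : Subgroup G) : ℕ :=
  sInf {n : ℕ | ∃ S : Finset G, S.card = n ∧ Subgroup.closure (S : Set G) = H}

/-- The rank gradient `∇G = inf (d(U) - 1)/[G : U]` over finite index subgroups `U`. -/
noncomputable def rankGradient (G : Type u) [Group G] : ℝ :=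
  sInf {r : ℝ | ∃ U : Subgroup G, U.FiniteIndex ∧
    r = ((subgroupRank U : ℝ) - 1) / (U.index : ℝ)}

/-- `G` is LERF if every finitely generated subgroup is an intersection of
finite index subgroups. -/
def IsLERF (G : Type u) [Group G] : Prop :=
  ∀ H : Subgroup G, H.FG →
    ∃ 𝒮 : Set (Subgroup G), (∀ U ∈ 𝒮, U.FiniteIndex) ∧ H = sInf 𝒮

/-- `G` is LPF if every finitely generated subgroup of infinite index is contained in
finite index subgroups of arbitrarily large index. -/
def IsLPF (G : Type u) [Group G] : Prop :=
  ∀ H : Subgroup G, H.FG → H.index = 0 →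
    ∀ n : ℕ, ∃ U : Subgroup G, H ≤ U ∧ U.FiniteIndex ∧ n ≤ U.index

/-- An epimorphism from `G` onto a finite group. -/
structure FiniteQuotient (G : Type u) [Group G] where
  K : Type u
  [grp : Group K]
  [fin : Fintype K]
  φ : G →* K
  surj : Function.Surjective φ

attribute [instance] FiniteQuotient.grp FiniteQuotient.fin

/-- The profinite measure `μ(S) = inf |φ(S)|/|φ(G)|` over epimorphisms `φ` from `G`
onto finite groups. -/
noncomputable def profiniteMeasure {G : Type u} [Group G] (S : Set G) : ℝ :=
  sInf {r : ℝ | ∃ q : FiniteQuotient G,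
    r = (Set.ncard (q.φ '' S) : ℝ) / (Fintype.card q.K : ℝ)}

/-- The product set `H₁H₂⋯Hₙ`. -/
def productSet {G : Type u} [Group G] {n : ℕ} (H : Fin n → Subgroup G) : Set G :=
  {g : G | ∃ f : Fin n → G, (∀ i, f i ∈ H i) ∧ g = (List.ofFn f).prod}

/-!
Write `A = ⟨S_A⟩` and `B = ⟨S_B⟩`. By LPF there are finite index `U ≥ A` and `V ≥ B` of index
at least `n`; put `W = U ⊓ V`. Schreier's lemma generates `W ⊓ A` by `[A : W ⊓ A] |S_A|` elements,
and `[A : W ⊓ A] ≤ [G : W] / n`, so `R = ⟨W ⊓ A, W ⊓ B⟩ ≤ W` has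
`d(R) ≤ [G : W] (|S_A| + |S_B|) / n < ∇G [G : W]` for large `n`. If `R` had finite index, then
`∇G [G : R] ≤ d(R) - 1` would contradict `[G : W] ≤ [G : R]`; so `R` has infinite index.
As `AB ⊆ F_A R F_B` for finite sets `F_A`, `F_B` of coset representatives, LPF applied to `R`
gives finite index `P ≥ R` of arbitrarily large index, and in `G ⧸ core P` the image of `AB`
fills at most the fraction `|F_A| |F_B| / [G : P]` of the group.
-/

open Finset

namespace Subgroup

variable {G : Type*} [Group G]

theorem exists_finset_card_le_relIndex_mul_closure_eq_inf {H K : Subgroup G}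
    [(H.subgroupOf K).FiniteIndex] {S : Finset G} (hS : closure (S : Set G) = K) :
    ∃ T : Finset G, #T ≤ H.relIndex K * #S ∧ closure (T : Set G) = H ⊓ K := by
  classical
  subst hS
  set K := closure (S : Set G)
  obtain ⟨T, hT, hTtop⟩ := exists_finset_card_le_mul (H.subgroupOf K)
    (S := S.preimage ((↑) : K → G) Subtype.val_injective.injOn)
    (by rw [coe_preimage]; exact closure_closure_coe_preimage)
  refine ⟨T.image (K.subtype.comp (H.subgroupOf K).subtype), ?_, ?_⟩
  · calc #(T.image _) ≤ #T := card_image_le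
      _ ≤ H.relIndex K * #(S.preimage _ _) := hT
      _ ≤ H.relIndex K * #S := by
        gcongr
        exact card_le_card_of_injOn _ (fun x hx => mem_preimage.mp hx)
          Subtype.val_injective.injOn
  · rw [coe_image, ← MonoidHom.map_closure, hTtop, ← MonoidHom.range_eq_map,
      MonoidHom.range_comp, range_subtype, subgroupOf_map_subtype]

theorem exists_finset_subset_mul_inf (H K : Subgroup G) [(H.subgroupOf K).FiniteIndex] :
    ∃ F : Finset G, (K : Set G) ⊆ (F : Set G) * ((H ⊓ K : Subgroup G) : Set G) := by
  classical
  let := (H.subgroupOf K).fintypeQuotientOfFiniteIndex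
  refine ⟨univ.image fun q : K ⧸ H.subgroupOf K => ((q.out : K) : G), fun x hx => ?_⟩
  set q : K ⧸ H.subgroupOf K := QuotientGroup.mk ⟨x, hx⟩
  obtain ⟨h, hh⟩ := QuotientGroup.mk_out_eq_mul (H.subgroupOf K) ⟨x, hx⟩
  refine ⟨(q.out : G), mem_image_of_mem _ (mem_univ q), (((h : K)⁻¹ : K) : G),
    mem_inf.mpr ⟨H.inv_mem (mem_subgroupOf.mp h.2), ((h : K)⁻¹).2⟩, ?_⟩
  simp [q, hh]

theorem exists_finset_subset_inf_mul (H K : Subgroup G) [(H.subgroupOf K).FiniteIndex] :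
    ∃ F : Finset G, (K : Set G) ⊆ ((H ⊓ K : Subgroup G) : Set G) * (F : Set G) := by
  classical
  obtain ⟨F, hKF⟩ := exists_finset_subset_mul_inf H K
  refine ⟨F.image (·⁻¹), fun x hx => ?_⟩
  obtain ⟨f, hf, h, hh, hfh⟩ := hKF (inv_mem hx)
  refine ⟨h⁻¹, inv_mem hh, f⁻¹, mem_image_of_mem _ hf, ?_⟩
  change h⁻¹ * f⁻¹ = x
  rw [← mul_inv_rev, show f * h = x⁻¹ from hfh, inv_inv]

theorem relIndex_mul_index_le {W U A : Subgroup G} [W.FiniteIndex] (hWU : W ≤ U) (hAU : A ≤ U) :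
    W.relIndex A * U.index ≤ W.index :=
  calc W.relIndex A * U.index ≤ W.relIndex U * U.index := by
        have := isFiniteRelIndex_of_finiteIndex (H := W) (K := U)
        gcongr; exact relIndex_le_of_le_right hAU relIndex_ne_zero
    _ = W.index := relIndex_mul_index hWU

end Subgroup

section RankGradient

variable {G : Type u} [Group G]

theorem subgroupRank_le_card {H : Subgroup G} {S : Finset G}
    (hS : Subgroup.closure (S : Set G) = H) : subgroupRank H ≤ #S :=
  Nat.sInf_le ⟨S, rfl, hS⟩

theorem rankGradient_mul_index_le (U : Subgroup G) [hU : U.FiniteIndex] :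
    rankGradient G * U.index ≤ subgroupRank U - 1 := by
  rw [← le_div_iff₀ (by exact_mod_cast Nat.pos_of_ne_zero hU.index_ne_zero)]
  refine csInf_le ⟨-1, ?_⟩ ⟨U, hU, rfl⟩
  rintro r ⟨V, hV, rfl⟩
  have hV1 : (1 : ℝ) ≤ V.index := by exact_mod_cast Nat.one_le_iff_ne_zero.mpr hV.index_ne_zero
  rw [le_div_iff₀ (by linarith)]
  linarith [(subgroupRank V).cast_nonneg (α := ℝ)]

theorem index_eq_zero_of_subgroupRank_lt {R W : Subgroup G} [hW : W.FiniteIndex] (hRW : R ≤ W)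
    (hrank : (subgroupRank R : ℝ) < rankGradient G * W.index) : R.index = 0 := by
  by_contra hR
  have : R.FiniteIndex := ⟨hR⟩
  have hWR : (W.index : ℝ) ≤ R.index := by exact_mod_cast Subgroup.index_antitone hRW
  have hW0 : (0 : ℝ) < W.index := by exact_mod_cast Nat.pos_of_ne_zero hW.index_ne_zero
  have hrg : 0 < rankGradient G := by
    by_contra! h
    nlinarith [(subgroupRank R).cast_nonneg (α := ℝ)]
  nlinarith [rankGradient_mul_index_le R]

end RankGradient

section ProfiniteMeasure

variable {G : Type u} [Group G]

theorem profiniteMeasure_nonneg (S : Set G) : 0 ≤ profiniteMeasure S :=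
  Real.sInf_nonneg (by rintro r ⟨q, rfl⟩; positivity)

theorem profiniteMeasure_le (S : Set G) (q : FiniteQuotient G) :
    profiniteMeasure S ≤ (q.φ '' S).ncard / Fintype.card q.K :=
  csInf_le ⟨0, by rintro r ⟨q, rfl⟩; positivity⟩ ⟨q, rfl⟩

theorem profiniteMeasure_le_of_subset_mul_mul {S : Set G} {F₁ F₂ : Finset G} {P : Subgroup G}
    [P.FiniteIndex] (hS : S ⊆ (F₁ : Set G) * P * F₂) :
    profiniteMeasure S ≤ #F₁ * #F₂ / P.index := by
  let M := P.normalCore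
  let φ := QuotientGroup.mk' M
  let := M.fintypeQuotientOfFiniteIndex
  have hcard : Nat.card (P.map φ) * P.index = Fintype.card (G ⧸ M) := by
    rw [← Nat.card_eq_fintype_card, ← Subgroup.card_mul_index (P.map φ),
      P.index_map_eq (QuotientGroup.mk'_surjective M) (by
        rw [QuotientGroup.ker_mk']; exact P.normalCore_le)]
  have himage : (φ '' S).ncard ≤ #F₁ * Nat.card (P.map φ) * #F₂ := by
    have hF (F : Finset G) : (φ '' F).ncard ≤ #F :=
      (Set.ncard_image_le F.finite_toSet).trans (Set.ncard_coe_finset F).le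
    calc (φ '' S).ncard ≤ (φ '' F₁ * φ '' P * φ '' F₂).ncard := by
          rw [← Set.image_mul, ← Set.image_mul]
          exact Set.ncard_le_ncard (Set.image_mono hS) (Set.toFinite _)
      _ ≤ (φ '' F₁).ncard * (φ '' P).ncard * (φ '' F₂).ncard := by
          simp only [← Nat.card_coe_set_eq]
          exact Set.natCard_mul_le.trans (Nat.mul_le_mul_right _ Set.natCard_mul_le)
      _ ≤ #F₁ * Nat.card (P.map φ) * #F₂ := by
          rw [← Subgroup.coe_map]
          gcongr
          · exact hF F₁
          · exact (Nat.card_coe_set_eq _).symm.le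
          · exact hF F₂
  have hP : 0 < Nat.card (P.map φ) := Nat.card_pos
  calc profiniteMeasure S
      ≤ _ := profiniteMeasure_le S ⟨G ⧸ M, φ, QuotientGroup.mk'_surjective M⟩
    _ ≤ (#F₁ * Nat.card (P.map φ) * #F₂ : ℕ) / (Nat.card (P.map φ) * P.index : ℕ) := by
        rw [hcard]; gcongr
    _ = #F₁ * #F₂ / P.index := by
        push_cast; field_simp

theorem profiniteMeasure_eq_zero_of_subset_mul_mul {S : Set G} {F₁ F₂ : Finset G}
    {R : Subgroup G} (hR : ∀ n : ℕ, ∃ P : Subgroup G, R ≤ P ∧ P.FiniteIndex ∧ n ≤ P.index)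
    (hS : S ⊆ (F₁ : Set G) * R * F₂) : profiniteMeasure S = 0 := by
  refine le_antisymm (le_of_forall_pos_le_add fun ε hε => ?_) (profiniteMeasure_nonneg S)
  obtain ⟨n, hn⟩ := exists_nat_gt ((#F₁ * #F₂ : ℝ) / ε)
  obtain ⟨P, hRP, hP, hnP⟩ := hR n
  have hn0 : (0 : ℝ) < n := lt_of_le_of_lt (by positivity) hn
  have hnP' : (n : ℝ) ≤ P.index := by exact_mod_cast hnP
  calc profiniteMeasure S ≤ #F₁ * #F₂ / P.index :=
        profiniteMeasure_le_of_subset_mul_mul (hS.trans (by gcongr))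
    _ ≤ #F₁ * #F₂ / n := by gcongr
    _ ≤ 0 + ε := by rw [zero_add, div_le_iff₀ hn0]; rw [div_lt_iff₀ hε] at hn; linarith

end ProfiniteMeasure

theorem IsLPF.exists_finiteIndex_index_sup_inf_eq_zero {G : Type u} [Group G] (hlpf : IsLPF G)
    (hrg : 0 < rankGradient G) {A B : Subgroup G} (hA : A.FG) (hB : B.FG)
    (hAi : A.index = 0) (hBi : B.index = 0) :
    ∃ W : Subgroup G, W.FiniteIndex ∧ (W ⊓ A ⊔ W ⊓ B).FG ∧ (W ⊓ A ⊔ W ⊓ B).index = 0 := by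
  classical
  obtain ⟨SA, hSA⟩ := hA
  obtain ⟨SB, hSB⟩ := hB
  obtain ⟨n, hn⟩ := exists_nat_gt ((#SA + #SB : ℝ) / rankGradient G)
  obtain ⟨U, hAU, hU, hUn⟩ := hlpf A ⟨SA, hSA⟩ hAi n
  obtain ⟨V, hBV, hV, hVn⟩ := hlpf B ⟨SB, hSB⟩ hBi n
  set W := U ⊓ V
  obtain ⟨TA, hTA, hTAW⟩ :=
    Subgroup.exists_finset_card_le_relIndex_mul_closure_eq_inf (H := W) hSA
  obtain ⟨TB, hTB, hTBW⟩ :=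
    Subgroup.exists_finset_card_le_relIndex_mul_closure_eq_inf (H := W) hSB
  have hR : Subgroup.closure ((TA ∪ TB : Finset G) : Set G) = W ⊓ A ⊔ W ⊓ B := by
    rw [coe_union, Subgroup.closure_union, hTAW, hTBW]
  refine ⟨W, inferInstance, ⟨TA ∪ TB, hR⟩,
    index_eq_zero_of_subgroupRank_lt (sup_le inf_le_left inf_le_left) ?_⟩
  have hrank : subgroupRank (W ⊓ A ⊔ W ⊓ B) ≤ W.relIndex A * #SA + W.relIndex B * #SB :=
    (subgroupRank_le_card hR).trans ((card_union_le _ _).trans (add_le_add hTA hTB))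
  have hkA : W.relIndex A * n ≤ W.index :=
    (Nat.mul_le_mul_left _ hUn).trans (Subgroup.relIndex_mul_index_le inf_le_left hAU)
  have hkB : W.relIndex B * n ≤ W.index :=
    (Nat.mul_le_mul_left _ hVn).trans (Subgroup.relIndex_mul_index_le inf_le_right hBV)
  have hn0 : (0 : ℝ) < n := (div_nonneg (by positivity) hrg.le).trans_lt hn
  rw [div_lt_iff₀ hrg] at hn
  have hW0 : (0 : ℝ) < W.index := by
    exact_mod_cast Nat.pos_of_ne_zero Subgroup.FiniteIndex.index_ne_zero
  refine lt_of_mul_lt_mul_right ?_ hn0.le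
  calc (subgroupRank (W ⊓ A ⊔ W ⊓ B) : ℝ) * n
      ≤ (W.relIndex A * #SA + W.relIndex B * #SB : ℕ) * n := by gcongr
    _ = (W.relIndex A * n : ℕ) * #SA + (W.relIndex B * n : ℕ) * #SB := by push_cast; ring
    _ ≤ W.index * #SA + W.index * #SB := by gcongr
    _ = W.index * (#SA + #SB) := by ring
    _ < W.index * (n * rankGradient G) := by gcongr
    _ = rankGradient G * W.index * n := by ring

theorem stmt_7_general {G : Type u} [Group G] (hlpf : IsLPF G)
    (hrg : 0 < rankGradient G) (A B : Subgroup G) (hA : A.FG) (hB : B.FG)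
    (hAi : A.index = 0) (hBi : B.index = 0) :
    profiniteMeasure ((A : Set G) * (B : Set G)) = 0 := by
  obtain ⟨W, hW, hRfg, hRi⟩ := hlpf.exists_finiteIndex_index_sup_inf_eq_zero hrg hA hB hAi hBi
  obtain ⟨FA, hFA⟩ := W.exists_finset_subset_mul_inf A
  obtain ⟨FB, hFB⟩ := W.exists_finset_subset_inf_mul B
  refine profiniteMeasure_eq_zero_of_subset_mul_mul (F₁ := FA) (F₂ := FB) (hlpf _ hRfg hRi) ?_
  calc (A : Set G) * B
      ⊆ FA * ((W ⊓ A : Subgroup G) : Set G) * (((W ⊓ B : Subgroup G) : Set G) * FB) :=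
        Set.mul_subset_mul hFA hFB
    _ = FA * (((W ⊓ A : Subgroup G) : Set G) * ((W ⊓ B : Subgroup G) : Set G)) * FB := by
        simp only [mul_assoc]
    _ ⊆ FA * ((W ⊓ A ⊔ W ⊓ B : Subgroup G) : Set G) * FB := by
        gcongr
        exact Subgroup.mul_subset (SetLike.coe_subset_coe.mpr le_sup_left)
          (SetLike.coe_subset_coe.mpr le_sup_right)

theorem stmt_7 {G : Type u} [Group G] (hfg : Group.FG G) (hlpf : IsLPF G)
    (hrg : 0 < rankGradient G) (A B : Subgroup G) (hA : A.FG) (hB : B.FG)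
    (hAi : A.index = 0) (hBi : B.index = 0) :
    profiniteMeasure ((A : Set G) * (B : Set G)) = 0 :=
  stmt_7_general hlpf hrg A B hA hB hAi hBi
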